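/- arXiv:1410.3154 — 5 statements merged into one kernel-verified Lean document; each statement's English description precedes it below -/
import Mathlib

section
/- Let P be a finite set of n points in ℝ³, let 0 < ε ≤ 1 with εn ≥ 1, and let 0 < β < 1. Let F be a finite family of closed lower halfspaces such that: (i) εn ≤ |h ∩ P| ≤ 2εn for every h ∈ F; and (ii) for every closed lower halfspace h' with εn ≤ |h' ∩ P| ≤ 2εn and h' ∉ F, there exists g ∈ F with |h' ∩ g ∩ P| > βεn. For each g ∈ F let N_g ⊆ g ∩ P be a (β/2)-net of g ∩ P for the family of closed lower halfspaces. Then every closed lower halfspace h with εn ≤ |h ∩ P| ≤ 2εn contains a point of ⋃_{g∈F} N_g. -/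
/-- A point in `ℝ³`. -/
abbrev Pt : Type := ℝ × ℝ × ℝ

/-- A closed lower halfspace in `ℝ³`: `{(x,y,z) : z ≤ a*x + b*y + c}`. -/
def IsLowerHalfspace (h : Set Pt) : Prop :=
  ∃ a b c : ℝ, h = {p : Pt | p.2.2 ≤ a * p.1 + b * p.2.1 + c}

/-- Let `F` be a maximal family of closed lower halfspaces, each containing between `εn`
and `2εn` points of `P`, such that any lower halfspace with between `εn` and `2εn` points
of `P` not in `F` shares more than `βεn` points of `P` with some member of `F`.  If for
each `g ∈ F` the set `N g ⊆ g ∩ P` is a `(β/2)`-net of `g ∩ P` for lower halfspaces, then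
every closed lower halfspace containing between `εn` and `2εn` points of `P` contains a
point of `⋃_{g ∈ F} N g`. -/
theorem maximal_family_gives_net (P : Finset Pt) (ε β : ℝ)
    (hε0 : 0 < ε) (hε1 : ε ≤ 1) (hεn : 1 ≤ ε * (P.card : ℝ))
    (hβ0 : 0 < β) (hβ1 : β < 1)
    (F : Set (Set Pt)) (hFfin : F.Finite)
    (hFlh : ∀ h ∈ F, IsLowerHalfspace h)
    (hFcard : ∀ h ∈ F, ε * (P.card : ℝ) ≤ ((h ∩ (P : Set Pt)).ncard : ℝ) ∧
      ((h ∩ (P : Set Pt)).ncard : ℝ) ≤ 2 * ε * (P.card : ℝ))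
    (hFmax : ∀ h' : Set Pt, IsLowerHalfspace h' →
      ε * (P.card : ℝ) ≤ ((h' ∩ (P : Set Pt)).ncard : ℝ) →
      ((h' ∩ (P : Set Pt)).ncard : ℝ) ≤ 2 * ε * (P.card : ℝ) →
      h' ∉ F →
      ∃ g ∈ F, β * ε * (P.card : ℝ) < ((h' ∩ g ∩ (P : Set Pt)).ncard : ℝ))
    (N : Set Pt → Set Pt)
    (hNsub : ∀ g ∈ F, N g ⊆ g ∩ (P : Set Pt))
    (hNnet : ∀ g ∈ F, ∀ r : Set Pt, IsLowerHalfspace r →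
      (β / 2) * ((g ∩ (P : Set Pt)).ncard : ℝ) ≤ ((r ∩ (g ∩ (P : Set Pt))).ncard : ℝ) →
      ∃ p ∈ N g, p ∈ r) :
    ∀ h : Set Pt, IsLowerHalfspace h →
      ε * (P.card : ℝ) ≤ ((h ∩ (P : Set Pt)).ncard : ℝ) →
      ((h ∩ (P : Set Pt)).ncard : ℝ) ≤ 2 * ε * (P.card : ℝ) →
      ∃ g ∈ F, ∃ p ∈ N g, p ∈ h := by
  intro h hlh hlo hhi
  by_cases hmem : h ∈ F
  · have hnet := hNnet h hmem h hlh
    have key : (β / 2) * ((h ∩ (P : Set Pt)).ncard : ℝ) ≤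
        ((h ∩ (h ∩ (P : Set Pt))).ncard : ℝ) := by
      have : h ∩ (h ∩ (P : Set Pt)) = h ∩ (P : Set Pt) := by
        rw [← Set.inter_assoc, Set.inter_self]
      rw [this]
      have hn0 : (0:ℝ) ≤ ((h ∩ (P : Set Pt)).ncard : ℝ) := by positivity
      nlinarith
    obtain ⟨p, hp, hph⟩ := hnet key
    exact ⟨h, hmem, p, hp, hph⟩
  · obtain ⟨g, hg, hcard⟩ := hFmax h hlh hlo hhi hmem
    have hgc := (hFcard g hg).2
    have key : (β / 2) * ((g ∩ (P : Set Pt)).ncard : ℝ) ≤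
        ((h ∩ (g ∩ (P : Set Pt))).ncard : ℝ) := by
      rw [← Set.inter_assoc]
      nlinarith
    obtain ⟨p, hp, hph⟩ := hNnet g hg h hlh key
    exact ⟨g, hg, p, hp, hph⟩
end

section
/- Let h be a closed lower halfspace in ℝ³ and let G be a nonempty finite family of closed lower halfspaces such that h is contained in the union of the members of G. Then there exist g₁, g₂, g₃ ∈ G (not necessarily distinct) with h ⊆ g₁ ∪ g₂ ∪ g₃. -/
/-!
Write `h` as the region below the graph of an affine (more generally, concave) function `f` on
the plane. Over a point `v` of the plane, `h` is covered by a lower halfspace `g` exactly when the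
top point `(v, f v)` lies in `g`, so `h ⊆ ⋃₀ G` says that the escape sets
`{v | (v, f v) ∉ g}`, `g ∈ G`, have empty intersection. These escape sets are open halfplanes (or
empty, or the whole plane), hence convex, and Helly's theorem in the plane finds at most three
of them that already have empty intersection.
-/

open Set Finset Module

def escapeSet (f : ℝ × ℝ → ℝ) (g : Set Pt) : Set (ℝ × ℝ) :=
  {v | (v.1, v.2, f v) ∉ g}

theorem concaveOn_affine (a b c : ℝ) :
    ConcaveOn ℝ univ fun v : ℝ × ℝ => a * v.1 + b * v.2 + c := by
  have hlin : ConcaveOn ℝ univ (a • LinearMap.fst ℝ ℝ ℝ + b • LinearMap.snd ℝ ℝ ℝ) :=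
    LinearMap.concaveOn _ convex_univ
  exact (hlin.add (concaveOn_const c convex_univ)).congr fun v _ => by simp

namespace IsLowerHalfspace

variable {g : Set Pt}

theorem mem_of_le (hg : IsLowerHalfspace g) {x y z z' : ℝ} (hz : z' ≤ z)
    (hmem : (x, y, z) ∈ g) : (x, y, z') ∈ g := by
  obtain ⟨a, b, c, rfl⟩ := hg
  exact hz.trans hmem

theorem convex_escapeSet (hg : IsLowerHalfspace g) {f : ℝ × ℝ → ℝ} (hf : ConcaveOn ℝ univ f) :
    Convex ℝ (escapeSet f g) := by
  obtain ⟨a, b, c, rfl⟩ := hg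
  have hconc : ConcaveOn ℝ univ (f - ⇑(a • LinearMap.fst ℝ ℝ ℝ + b • LinearMap.snd ℝ ℝ ℝ)) :=
    hf.sub (LinearMap.convexOn _ convex_univ)
  have hset : escapeSet f {p : Pt | p.2.2 ≤ a * p.1 + b * p.2.1 + c} =
      {v | v ∈ univ ∧ c < (f - ⇑(a • LinearMap.fst ℝ ℝ ℝ + b • LinearMap.snd ℝ ℝ ℝ)) v} := by
    ext v
    simp only [escapeSet, mem_ofPred_eq, not_le, mem_univ, true_and, Pi.sub_apply,
      LinearMap.add_apply, LinearMap.smul_apply, LinearMap.fst_apply, LinearMap.snd_apply,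
      smul_eq_mul]
    constructor <;> intro hv <;> linarith
  rw [hset]
  exact hconc.convex_gt c

end IsLowerHalfspace

theorem subset_sUnion_iff_iInter_escapeSet_eq_empty {f : ℝ × ℝ → ℝ} {s : Set (Set Pt)}
    (hs : ∀ g ∈ s, IsLowerHalfspace g) :
    {p : Pt | p.2.2 ≤ f (p.1, p.2.1)} ⊆ ⋃₀ s ↔ ⋂ g ∈ s, escapeSet f g = ∅ := by
  simp only [Set.eq_empty_iff_forall_notMem, mem_iInter, escapeSet, mem_ofPred_eq, not_forall,
    not_not]
  constructor
  · intro hcover v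
    obtain ⟨g, hg, hv⟩ := @hcover (v.1, v.2, f v) (show f v ≤ f v from le_rfl)
    exact ⟨g, hg, hv⟩
  · rintro hescape ⟨x, y, z⟩ hz
    obtain ⟨g, hg, hv⟩ := hescape (x, y)
    exact ⟨g, hg, (hs g hg).mem_of_le hz hv⟩

theorem Convex.exists_card_le_finrank_add_one_iInter_eq_empty {𝕜 E ι : Type*} [Field 𝕜]
    [LinearOrder 𝕜] [IsStrictOrderedRing 𝕜] [AddCommGroup E] [Module 𝕜 E]
    [FiniteDimensional 𝕜 E] {F : ι → Set E} {s : Finset ι}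
    (hconv : ∀ i ∈ s, Convex 𝕜 (F i)) (hempty : ⋂ i ∈ s, F i = ∅) :
    ∃ t ⊆ s, #t ≤ finrank 𝕜 E + 1 ∧ ⋂ i ∈ t, F i = ∅ := by
  by_contra! hne
  exact (Convex.helly_theorem' hconv hne).ne_empty hempty

theorem Finset.exists_subset_triple_of_card_le_three {α : Type*} {t : Finset α}
    (hne : t.Nonempty) (hcard : #t ≤ 3) :
    ∃ a ∈ t, ∃ b ∈ t, ∃ c ∈ t, (t : Set α) ⊆ {a, b, c} := by
  classical
  have hpos : 0 < #t := hne.card_pos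
  interval_cases hc : #t
  · obtain ⟨a, rfl⟩ := card_eq_one.1 hc
    exact ⟨a, by simp, a, by simp, a, by simp, by simp⟩
  · obtain ⟨a, b, -, rfl⟩ := card_eq_two.1 hc
    exact ⟨a, by simp, b, by simp, b, by simp, by simp⟩
  · obtain ⟨a, b, c, -, -, -, rfl⟩ := card_eq_three.1 hc
    exact ⟨a, by simp, b, by simp, c, by simp, by simp⟩

theorem lower_halfspace_covered_by_three_general (h : Set Pt)
    (hh : IsLowerHalfspace h) (G : Set (Set Pt)) (hGfin : G.Finite)
    (hGlh : ∀ g ∈ G, IsLowerHalfspace g)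
    (hcover : h ⊆ ⋃₀ G) :
    ∃ g₁ ∈ G, ∃ g₂ ∈ G, ∃ g₃ ∈ G, h ⊆ g₁ ∪ g₂ ∪ g₃ := by
  classical
  obtain ⟨a, b, c, rfl⟩ := hh
  set f : ℝ × ℝ → ℝ := fun v => a * v.1 + b * v.2 + c
  have hempty : ⋂ g ∈ hGfin.toFinset, escapeSet f g = ∅ := by
    simpa using (subset_sUnion_iff_iInter_escapeSet_eq_empty hGlh).1 hcover
  obtain ⟨t, htG, htcard, ht⟩ := Convex.exists_card_le_finrank_add_one_iInter_eq_empty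
    (fun g hg => (hGlh g (by simpa using hg)).convex_escapeSet (concaveOn_affine a b c)) hempty
  have htG' : ∀ g ∈ t, g ∈ G := fun g hg => by simpa using htG hg
  have htne : t.Nonempty := Finset.nonempty_iff_ne_empty.2 <| by
    rintro rfl
    simp at ht
  obtain ⟨g₁, h₁, g₂, h₂, g₃, h₃, hsub⟩ :=
    exists_subset_triple_of_card_le_three htne (by simpa using htcard)
  refine ⟨g₁, htG' g₁ h₁, g₂, htG' g₂ h₂, g₃, htG' g₃ h₃, ?_⟩
  calc {p : Pt | p.2.2 ≤ f (p.1, p.2.1)}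
      ⊆ ⋃₀ ↑t := (subset_sUnion_iff_iInter_escapeSet_eq_empty
          fun g hg => hGlh g (htG' g hg)).2 (by simpa using ht)
    _ ⊆ ⋃₀ {g₁, g₂, g₃} := sUnion_mono hsub
    _ = g₁ ∪ g₂ ∪ g₃ := by simp [sUnion_insert, Set.union_assoc]

/-- If a closed lower halfspace `h` is covered by the union of a nonempty finite family `G`
of closed lower halfspaces, then `h` is covered by (at most) three members of `G`. -/
theorem lower_halfspace_covered_by_three (h : Set Pt)
    (hh : IsLowerHalfspace h) (G : Set (Set Pt)) (hGfin : G.Finite)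
    (hGne : G.Nonempty) (hGlh : ∀ g ∈ G, IsLowerHalfspace g)
    (hcover : h ⊆ ⋃₀ G) :
    ∃ g₁ ∈ G, ∃ g₂ ∈ G, ∃ g₃ ∈ G, h ⊆ g₁ ∪ g₂ ∪ g₃ :=
  lower_halfspace_covered_by_three_general h hh G hGfin hGlh hcover
end

section
/- Let P be a finite set of points in ℝ³, let m ≥ 1 be a real number, and let F be a finite family of closed lower halfspaces with pairwise distinct bounding planes such that |h ∩ P| ≥ m for every h ∈ F and |h ∩ g ∩ P| < m/3 for every two distinct h, g ∈ F. Then every bounding plane appears on the upper envelope of the bounding planes of F: for every h ∈ F, writing f_h : ℝ² → ℝ for the affine function whose graph bounds h, there exists p ∈ ℝ² with f_h(p) ≥ f_g(p) for all g ∈ F. -/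
/-- A nonvertical plane in `ℝ³`, identified with the coefficient triple `(a, b, c)` of the
affine function `f(x,y) = a*x + b*y + c` whose graph it is. -/
abbrev Plane : Type := ℝ × ℝ × ℝ

/-- Evaluation of the affine function with coefficients `f = (a,b,c)` at `p ∈ ℝ²`. -/
def peval (f : Plane) (p : ℝ × ℝ) : ℝ := f.1 * p.1 + f.2.1 * p.2 + f.2.2

/-- The closed lower halfspace bounded from above by the plane `f = (a,b,c)`:
`{(x,y,z) : z ≤ a*x + b*y + c}`. -/
def lowerHS (f : Plane) : Set Pt := {p : Pt | p.2.2 ≤ peval f (p.1, p.2.1)}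

/-- The halfplane of `ℝ²` where plane `g` lies (weakly) below plane `f` is convex. -/
lemma convex_below (f g : Plane) : Convex ℝ {p : ℝ × ℝ | peval g p ≤ peval f p} := by
  have hl : IsLinearMap ℝ (fun p : ℝ × ℝ => (g.1 - f.1) * p.1 + (g.2.1 - f.2.1) * p.2) := by
    constructor <;> intros <;> simp [smul_eq_mul] <;> ring
  have h : {p : ℝ × ℝ | peval g p ≤ peval f p}
      = {p : ℝ × ℝ | (g.1 - f.1) * p.1 + (g.2.1 - f.2.1) * p.2 ≤ f.2.2 - g.2.2} := by
    ext p; simp only [Set.mem_setOf_eq, peval]; constructor <;> intro <;> linarith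
  rw [h]
  exact convex_halfSpace_le hl _

/-- Let `F` be a finite family of closed lower halfspaces with pairwise distinct bounding
planes, each containing at least `m ≥ 1` points of a finite set `P`, with any two distinct
members sharing fewer than `m/3` points of `P`.  Then every bounding plane appears on the
upper envelope of the bounding planes of `F`. -/
theorem all_planes_on_upper_envelope (P : Finset Pt) (m : ℝ) (hm : 1 ≤ m)
    (F : Finset Plane)
    (hbig : ∀ f ∈ F, m ≤ ((lowerHS f ∩ (P : Set Pt)).ncard : ℝ))
    (hsmall : ∀ f ∈ F, ∀ g ∈ F, f ≠ g →
      ((lowerHS f ∩ lowerHS g ∩ (P : Set Pt)).ncard : ℝ) < m / 3) :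
    ∀ f ∈ F, ∃ p : ℝ × ℝ, ∀ g ∈ F, peval g p ≤ peval f p := by
  classical
  intro f hf
  by_contra hcon
  push_neg at hcon
  -- halfplanes where g lies below f
  set H : Plane → Set (ℝ × ℝ) := fun g => {p : ℝ × ℝ | peval g p ≤ peval f p} with hH
  have hempty : ¬ (⋂ g ∈ F, H g).Nonempty := by
    rintro ⟨p, hp⟩
    obtain ⟨g, hg, hlt⟩ := hcon p
    have := Set.mem_iInter₂.1 hp g hg
    simp only [hH, Set.mem_setOf_eq] at this
    exact absurd this (not_le.2 hlt)
  -- Helly's theorem in ℝ² gives ≤ 3 halfplanes with empty intersection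
  have hI : ∃ I ⊆ F, I.card ≤ Module.finrank ℝ (ℝ × ℝ) + 1 ∧ ¬ (⋂ g ∈ I, H g).Nonempty := by
    by_contra h
    push_neg at h
    exact hempty (Convex.helly_theorem' (fun g _ => convex_below f g) (fun I hIF hIc => h I hIF hIc))
  obtain ⟨I, hIF, hIcard, hIempty⟩ := hI
  have hrank : Module.finrank ℝ (ℝ × ℝ) = 2 := by simp
  rw [hrank] at hIcard
  set J : Finset Plane := I.erase f with hJ
  have hJcard : J.card ≤ 3 := le_trans (Finset.card_le_card (Finset.erase_subset _ _)) hIcard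
  -- at every point, some plane of J is strictly above f
  have hJab : ∀ p : ℝ × ℝ, ∃ g ∈ J, peval f p < peval g p := by
    intro p
    by_contra h
    push_neg at h
    apply hIempty
    refine ⟨p, Set.mem_iInter₂.2 fun g hg => ?_⟩
    simp only [hH, Set.mem_setOf_eq]
    rcases eq_or_ne g f with rfl | hne
    · exact le_refl _
    · exact h g (Finset.mem_erase.2 ⟨hne, hg⟩)
  -- counting
  set Sf : Finset Pt := P.filter (fun q => q ∈ lowerHS f) with hSf
  set T : Plane → Finset Pt := fun g => P.filter (fun q => q ∈ lowerHS f ∧ q ∈ lowerHS g) with hT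
  have hSfcard : m ≤ (Sf.card : ℝ) := by
    have : lowerHS f ∩ (P : Set Pt) = (Sf : Set Pt) := by
      ext q; simp [hSf, and_comm]
    have h1 := hbig f hf
    rwa [this, Set.ncard_coe_finset] at h1
  have hTcard : ∀ g ∈ J, ((T g).card : ℝ) < m / 3 := by
    intro g hg
    have hgF : g ∈ F := hIF (Finset.mem_of_mem_erase hg)
    have hne : f ≠ g := (Finset.ne_of_mem_erase hg).symm
    have : lowerHS f ∩ lowerHS g ∩ (P : Set Pt) = ((T g) : Set Pt) := by
      ext q
      simp only [hT, Finset.coe_filter, Set.mem_setOf_eq, Set.mem_inter_iff,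
        Finset.mem_coe]
      tauto
    have h1 := hsmall f hf g hgF hne
    rwa [this, Set.ncard_coe_finset] at h1
  have hsub : Sf ⊆ J.biUnion T := by
    intro q hq
    simp only [hSf, Finset.mem_filter] at hq
    obtain ⟨hqP, hqf⟩ := hq
    obtain ⟨g, hg, hlt⟩ := hJab (q.1, q.2.1)
    refine Finset.mem_biUnion.2 ⟨g, hg, ?_⟩
    simp only [hT, Finset.mem_filter]
    exact ⟨hqP, hqf, le_trans hqf hlt.le⟩
  -- J is nonempty since m ≥ 1
  have hJne : J.Nonempty := by
    rcases Finset.eq_empty_or_nonempty J with h | h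
    · exfalso
      have : Sf = ∅ := Finset.subset_empty.1 (by simpa [h] using hsub)
      rw [this] at hSfcard
      simp at hSfcard
      linarith
    · exact h
  have hcount : (Sf.card : ℝ) ≤ ∑ g ∈ J, ((T g).card : ℝ) := by
    have h1 : Sf.card ≤ (J.biUnion T).card := Finset.card_le_card hsub
    have h2 : (J.biUnion T).card ≤ ∑ g ∈ J, (T g).card := Finset.card_biUnion_le
    calc (Sf.card : ℝ) ≤ ((∑ g ∈ J, (T g).card : ℕ) : ℝ) := by
          exact_mod_cast le_trans h1 h2
      _ = ∑ g ∈ J, ((T g).card : ℝ) := by push_cast; ring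
  have hsum : ∑ g ∈ J, ((T g).card : ℝ) < ∑ g ∈ J, (m / 3) :=
    Finset.sum_lt_sum_of_nonempty hJne hTcard
  have hsum2 : ∑ g ∈ J, (m / 3) ≤ 3 * (m / 3) := by
    rw [Finset.sum_const, nsmul_eq_mul]
    have hm3 : 0 ≤ m / 3 := by linarith
    have : (J.card : ℝ) ≤ 3 := by exact_mod_cast hJcard
    nlinarith
  linarith
end

section
/- For every integer k ≥ 1, let P = {(x, y) ∈ ℤ² : 1 ≤ x ≤ k, 1 ≤ y ≤ 2k²}, so n := |P| = 2k³, and set ε := 1/(2k²). Then the family F of lines {y = ax + b : a, b ∈ ℤ, 1 ≤ a ≤ k, 1 ≤ b ≤ k²} consists of k³ pairwise distinct lines, each line of F contains exactly εn = k points of P, any two distinct lines of F have at most one point of P in common, and |F| = k³ = ε^{−3/2}/(2√2). In particular, a family of lines each containing exactly εn points of a set of n points, with pairwise intersections of size at most one, can have size Ω(ε^{−3/2}). -/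
/-!
Lines `y = a x + b` with integer slope `a ∈ [1, k]` and intercept `b ∈ [1, k²]` stay inside
the strip `1 ≤ y ≤ 2k²` for `1 ≤ x ≤ k`, so each of them passes through exactly one grid point
above every column `x = 1, …, k`. Distinct lines meet in at most one point, and the parameters
`(a, b)` are recovered from the line, so there are `k · k² = k³` of them.
-/

open Finset

section Lines

variable {R : Type*}

def graphLine [Ring R] (a b : R) : Set (R × R) := {p | p.2 = a * p.1 + b}

theorem graphLine_injective2 [Ring R] : Function.Injective2 (graphLine (R := R)) := by
  intro a a' b b' h
  have h₀ : ((0 : R), b) ∈ graphLine a' b' := h ▸ show b = a * 0 + b by simp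
  have h₁ : ((1 : R), a + b) ∈ graphLine a' b' := h ▸ show a + b = a * 1 + b by simp
  simp only [graphLine, Set.mem_ofPred_eq, mul_zero, zero_add, mul_one] at h₀ h₁
  exact ⟨add_right_cancel (h₀ ▸ h₁), h₀⟩

theorem graphLine_inter_subsingleton [Field R] {a b a' b' : R}
    (h : graphLine a b ≠ graphLine a' b') : (graphLine a b ∩ graphLine a' b').Subsingleton := by
  rintro ⟨x, y⟩ ⟨hy, hy'⟩ ⟨u, v⟩ ⟨hv, hv'⟩
  simp only [graphLine, Set.mem_ofPred_eq] at hy hy' hv hv'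
  have ha : a ≠ a' := by
    rintro rfl
    exact h (congrArg (graphLine a) (by linear_combination hy' - hy))
  have hxu : x = u :=
    mul_left_cancel₀ (sub_ne_zero.2 ha) (by linear_combination hy' - hy - hv' + hv)
  subst hxu
  simp only [Prod.mk.injEq, true_and]
  rw [hy, hv]

end Lines

noncomputable def intBox (m n : ℤ) : Finset (ℝ × ℝ) :=
  (Icc 1 m ×ˢ Icc 1 n).image (Prod.map Int.cast Int.cast)

theorem card_intBox (m n : ℤ) : (intBox m n).card = m.toNat * n.toNat := by
  rw [intBox, card_image_of_injective _ (Int.cast_injective.prodMap Int.cast_injective),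
    card_product, Int.card_Icc, Int.card_Icc, add_sub_cancel_right, add_sub_cancel_right]

theorem ncard_graphLine_inter_intBox {a b m n : ℤ} (h : ∀ x ∈ Icc 1 m, a * x + b ∈ Icc 1 n) :
    (graphLine (a : ℝ) b ∩ intBox m n).ncard = m.toNat := by
  have hpoints : graphLine (a : ℝ) b ∩ intBox m n =
      (fun x : ℤ => ((x : ℝ), ((a * x + b : ℤ) : ℝ))) '' (Icc 1 m : Set ℤ) := by
    ext ⟨u, v⟩
    simp only [graphLine, intBox, coe_image, coe_product, Set.mem_inter_iff, Set.mem_ofPred_eq,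
      Set.mem_image, Set.mem_prod, mem_coe, Prod.exists, Prod.map, Prod.mk.injEq]
    constructor
    · rintro ⟨hv, x, y, ⟨hx, -⟩, rfl, rfl⟩
      exact ⟨x, hx, rfl, by push_cast; exact hv.symm⟩
    · rintro ⟨x, hx, rfl, rfl⟩
      exact ⟨by push_cast; ring, x, a * x + b, ⟨hx, h x hx⟩, rfl, rfl⟩
  have hinj : Function.Injective fun x : ℤ => ((x : ℝ), ((a * x + b : ℤ) : ℝ)) :=
    fun x y hxy => by simpa using congrArg Prod.fst hxy
  rw [hpoints, Set.ncard_image_of_injective _ hinj, Set.ncard_coe_finset, Int.card_Icc,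
    add_sub_cancel_right]

theorem ncard_setOf_graphLine (m n : ℤ) :
    {L : Set (ℝ × ℝ) | ∃ a b : ℤ, 1 ≤ a ∧ a ≤ m ∧ 1 ≤ b ∧ b ≤ n ∧
      L = graphLine (a : ℝ) b}.ncard = m.toNat * n.toNat := by
  have hfamily : {L : Set (ℝ × ℝ) | ∃ a b : ℤ, 1 ≤ a ∧ a ≤ m ∧ 1 ≤ b ∧ b ≤ n ∧
      L = graphLine (a : ℝ) b} =
      ((Icc 1 m ×ˢ Icc 1 n).image fun q : ℤ × ℤ => graphLine (q.1 : ℝ) q.2 : Set _) := by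
    ext L
    simp only [Set.mem_ofPred_eq, coe_image, Set.mem_image, mem_coe, mem_product, mem_Icc,
      Prod.exists]
    constructor
    · rintro ⟨a, b, ha₁, ha₂, hb₁, hb₂, rfl⟩
      exact ⟨a, b, ⟨⟨ha₁, ha₂⟩, hb₁, hb₂⟩, rfl⟩
    · rintro ⟨a, b, ⟨⟨ha₁, ha₂⟩, hb₁, hb₂⟩, rfl⟩
      exact ⟨a, b, ha₁, ha₂, hb₁, hb₂, rfl⟩
  have hinj : Function.Injective fun q : ℤ × ℤ => graphLine (q.1 : ℝ) q.2 :=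
    graphLine_injective2.uncurry.comp (Int.cast_injective.prodMap Int.cast_injective)
  rw [hfamily, Set.ncard_coe_finset, card_image_of_injective _ hinj, card_product,
    Int.card_Icc, Int.card_Icc, add_sub_cancel_right, add_sub_cancel_right]

theorem one_div_two_mul_sq_rpow_neg_three_halves {x : ℝ} (hx : 0 ≤ x) :
    (1 / (2 * x ^ 2)) ^ (-(3 : ℝ) / 2) = 2 * √2 * x ^ 3 := by
  rw [one_div, Real.inv_rpow (by positivity), ← Real.rpow_neg (by positivity), neg_div, neg_neg,
    show (3 : ℝ) / 2 = 1 / 2 * 3 by norm_num, Real.rpow_mul (by positivity),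
    ← Real.sqrt_eq_rpow, Real.sqrt_mul zero_le_two, Real.sqrt_sq hx]
  norm_cast
  rw [mul_pow, pow_succ, Real.sq_sqrt zero_le_two]

theorem elekes_grid_construction_general (k : ℕ)
    (P : Finset (ℝ × ℝ))
    (hP : P = ((Finset.Icc (1 : ℤ) (k : ℤ)) ×ˢ (Finset.Icc (1 : ℤ) (2 * (k : ℤ) ^ 2))).image
      (fun p : ℤ × ℤ => ((p.1 : ℝ), (p.2 : ℝ))))
    (ε : ℝ) (hε : ε = 1 / (2 * (k : ℝ) ^ 2))
    (F : Set (Set (ℝ × ℝ)))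
    (hF : F = {L : Set (ℝ × ℝ) | ∃ a b : ℤ, 1 ≤ a ∧ a ≤ (k : ℤ) ∧ 1 ≤ b ∧ b ≤ (k : ℤ) ^ 2 ∧
      L = {p : ℝ × ℝ | p.2 = (a : ℝ) * p.1 + (b : ℝ)}}) :
    P.card = 2 * k ^ 3 ∧
    F.ncard = k ^ 3 ∧
    ε * (P.card : ℝ) = (k : ℝ) ∧
    (∀ L ∈ F, ((L ∩ (P : Set (ℝ × ℝ))).ncard : ℝ) = ε * (P.card : ℝ)) ∧
    (∀ L₁ ∈ F, ∀ L₂ ∈ F, L₁ ≠ L₂ → (L₁ ∩ L₂ ∩ (P : Set (ℝ × ℝ))).ncard ≤ 1) ∧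
    ((k : ℝ) ^ 3 = ε ^ (-(3 : ℝ) / 2) / (2 * Real.sqrt 2)) := by
  change P = intBox k (2 * k ^ 2) at hP
  change F = {L | ∃ a b : ℤ, 1 ≤ a ∧ a ≤ (k : ℤ) ∧ 1 ≤ b ∧ b ≤ (k : ℤ) ^ 2 ∧
    L = graphLine (a : ℝ) b} at hF
  have hcard : P.card = 2 * k ^ 3 := by
    rw [hP, card_intBox]
    norm_cast
    ring
  have hεn : ε * P.card = k := by
    rw [hcard, hε]
    rcases k.eq_zero_or_pos with rfl | hk₀
    · simp
    · field_simp
      push_cast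
      ring
  refine ⟨hcard, ?_, hεn, ?_, ?_, ?_⟩
  · rw [hF, ncard_setOf_graphLine]
    norm_cast
    ring
  · rintro L hL
    obtain ⟨a, b, ha₁, ha₂, hb₁, hb₂, rfl⟩ := hF ▸ hL
    rw [hεn, hP, ncard_graphLine_inter_intBox, Int.toNat_natCast]
    intro x hx
    rw [mem_Icc] at hx ⊢
    constructor <;> nlinarith
  · rintro _ hL₁ _ hL₂ hne
    obtain ⟨a₁, b₁, -, -, -, -, rfl⟩ := hF ▸ hL₁
    obtain ⟨a₂, b₂, -, -, -, -, rfl⟩ := hF ▸ hL₂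
    exact Set.ncard_le_one_iff_subsingleton.2
      ((graphLine_inter_subsingleton hne).anti Set.inter_subset_left)
  · rw [hε, one_div_two_mul_sq_rpow_neg_three_halves k.cast_nonneg]
    field_simp

/-- The Elekes-type construction: for every integer `k ≥ 1`, the grid
`P = {(x,y) ∈ ℤ² : 1 ≤ x ≤ k, 1 ≤ y ≤ 2k²}` (viewed in `ℝ²`) has `n = |P| = 2k³` points,
and with `ε = 1/(2k²)`, the family `F` of lines `y = a*x + b` with integers `1 ≤ a ≤ k`,
`1 ≤ b ≤ k²` consists of `k³` pairwise distinct lines, each containing exactly `εn = k`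
points of `P`, any two distinct lines of `F` sharing at most one point of `P`, and
`|F| = k³ = ε^{-3/2}/(2√2)`. -/
theorem elekes_grid_construction (k : ℕ) (hk : 1 ≤ k)
    (P : Finset (ℝ × ℝ))
    (hP : P = ((Finset.Icc (1 : ℤ) (k : ℤ)) ×ˢ (Finset.Icc (1 : ℤ) (2 * (k : ℤ) ^ 2))).image
      (fun p : ℤ × ℤ => ((p.1 : ℝ), (p.2 : ℝ))))
    (ε : ℝ) (hε : ε = 1 / (2 * (k : ℝ) ^ 2))
    (F : Set (Set (ℝ × ℝ)))
    (hF : F = {L : Set (ℝ × ℝ) | ∃ a b : ℤ, 1 ≤ a ∧ a ≤ (k : ℤ) ∧ 1 ≤ b ∧ b ≤ (k : ℤ) ^ 2 ∧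
      L = {p : ℝ × ℝ | p.2 = (a : ℝ) * p.1 + (b : ℝ)}}) :
    P.card = 2 * k ^ 3 ∧
    F.ncard = k ^ 3 ∧
    ε * (P.card : ℝ) = (k : ℝ) ∧
    (∀ L ∈ F, ((L ∩ (P : Set (ℝ × ℝ))).ncard : ℝ) = ε * (P.card : ℝ)) ∧
    (∀ L₁ ∈ F, ∀ L₂ ∈ F, L₁ ≠ L₂ → (L₁ ∩ L₂ ∩ (P : Set (ℝ × ℝ))).ncard ≤ 1) ∧
    ((k : ℝ) ^ 3 = ε ^ (-(3 : ℝ) / 2) / (2 * Real.sqrt 2)) :=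
  elekes_grid_construction_general k P hP ε hε F hF
end

section
/- Let H be a finite set of n nonvertical planes in ℝ³ and let 0 < ε ≤ 1 with εn ≥ 4. Let X ⊆ H be a nonempty subset such that: (i) for every point q ∈ ℝ³ not lying on any plane of H, |level_X(q)/|X| − level_H(q)/n| < ε/4; and (ii) for all points u, v ∈ ℝ³ not lying on any plane of H, |d_X(u,v)/|X| − d_H(u,v)/n| < ε/4. Let F be a finite set of points, none lying on any plane of H, each with level_X at most (3/2)ε|X|, such that for every point q not lying on any plane of H with level_X(q) ≤ (3/2)ε|X| there exists q'' ∈ F with d_X(q, q'') ≤ (1/4)ε|X|. For each p ∈ F let H_p := {f ∈ H : f lies strictly below p}, and let N_p ⊆ H_p be a set such that for every point q ∈ ℝ³, if at least (1/8)|H_p| planes of H_p lie strictly below q then some plane of N_p lies strictly below q. Then for every point q not lying on any plane of H with level_H(q) = ⌈εn⌉, some plane of ⋃_{p∈F} N_p lies strictly below q. -/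
/-- A plane `f` lies strictly below a point `u`. -/
def below (f : Plane) (u : Pt) : Prop := peval f (u.1, u.2.1) < u.2.2

/-- A point `u` lies on a plane `f`. -/
def onPlane (f : Plane) (u : Pt) : Prop := peval f (u.1, u.2.1) = u.2.2

open Classical in
/-- The level of a point `u` with respect to a finite set `H` of nonvertical planes: the
number of planes of `H` lying strictly below `u`. -/
noncomputable def level (H : Finset Plane) (u : Pt) : ℕ :=
  (H.filter (fun f => below f u)).card

open Classical in
/-- The crossing distance between points `u, v ∈ ℝ³` with respect to a finite set `H` of
nonvertical planes: the number of planes of `H` strictly separating `u` from `v`. -/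
noncomputable def cdist (H : Finset Plane) (u v : Pt) : ℕ :=
  (H.filter (fun f =>
    (u.2.2 - peval f (u.1, u.2.1)) * (v.2.2 - peval f (v.1, v.2.1)) < 0)).card

open Classical in
/-- The set of planes of `H` lying strictly below the point `p`. -/
noncomputable def planesBelow (H : Finset Plane) (p : Pt) : Finset Plane :=
  H.filter (fun f => below f p)

set_option maxHeartbeats 1600000 in
open Classical in
/-- Correctness of the net in Matoušek's shallow-cutting construction: if `X` is a good
relative approximation of `H` for levels and crossing distances, `F` is a set of points of
`X`-level at most `(3/2)ε|X|` such that every point of `X`-level at most `(3/2)ε|X|` is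
within `X`-crossing distance `(1/4)ε|X|` of some point of `F`, and for each `p ∈ F` the set
`N p` hits every point below which at least `1/8` of the planes of `H` below `p` pass, then
every point (off the planes of `H`) of `H`-level exactly `⌈εn⌉` has some plane of
`⋃_{p ∈ F} N p` strictly below it. -/
theorem shallow_cutting_net_correct (H : Finset Plane) (ε : ℝ)
    (hε0 : 0 < ε) (hε1 : ε ≤ 1) (hεn : 4 ≤ ε * (H.card : ℝ))
    (X : Finset Plane) (hXH : X ⊆ H) (hXne : X.Nonempty)
    (hlevApprox : ∀ q : Pt, (∀ f ∈ H, ¬ onPlane f q) →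
      |(level X q : ℝ) / (X.card : ℝ) - (level H q : ℝ) / (H.card : ℝ)| < ε / 4)
    (hdistApprox : ∀ u v : Pt, (∀ f ∈ H, ¬ onPlane f u) → (∀ f ∈ H, ¬ onPlane f v) →
      |(cdist X u v : ℝ) / (X.card : ℝ) - (cdist H u v : ℝ) / (H.card : ℝ)| < ε / 4)
    (F : Finset Pt)
    (hFoff : ∀ p ∈ F, ∀ f ∈ H, ¬ onPlane f p)
    (hFlev : ∀ p ∈ F, (level X p : ℝ) ≤ (3 / 2) * ε * (X.card : ℝ))
    (hFcover : ∀ q : Pt, (∀ f ∈ H, ¬ onPlane f q) →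
      (level X q : ℝ) ≤ (3 / 2) * ε * (X.card : ℝ) →
      ∃ p ∈ F, (cdist X q p : ℝ) ≤ (1 / 4) * ε * (X.card : ℝ))
    (N : Pt → Finset Plane)
    (hNsub : ∀ p ∈ F, N p ⊆ planesBelow H p)
    (hNnet : ∀ p ∈ F, ∀ q : Pt,
      (1 / 8) * ((planesBelow H p).card : ℝ)
          ≤ (((planesBelow H p).filter (fun f => below f q)).card : ℝ) →
      ∃ f ∈ N p, below f q) :
    ∀ q : Pt, (∀ f ∈ H, ¬ onPlane f q) → level H q = Nat.ceil (ε * (H.card : ℝ)) →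
      ∃ p ∈ F, ∃ f ∈ N p, below f q := by
  classical
  intro q hq hlev
  have hm0 : (0:ℝ) < (X.card : ℝ) := by exact_mod_cast Finset.card_pos.mpr hXne
  have hn4 : (4:ℝ) ≤ (H.card : ℝ) := by nlinarith [hεn, hε1, hm0]
  have hn0 : (0:ℝ) < (H.card : ℝ) := by linarith
  have hεn0 : (0:ℝ) < ε * (H.card : ℝ) := by linarith
  have hceil_lt : ((Nat.ceil (ε * (H.card:ℝ)) : ℕ) : ℝ) < ε * (H.card:ℝ) + 1 :=
    Nat.ceil_lt_add_one (le_of_lt hεn0)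
  have hceil_ge : ε * (H.card:ℝ) ≤ ((Nat.ceil (ε * (H.card:ℝ)) : ℕ) : ℝ) := Nat.le_ceil _
  -- level of q w.r.t. X is small
  have h1 := (abs_lt.mp (hlevApprox q hq)).2
  rw [hlev] at h1
  have hc1 : ((Nat.ceil (ε * (H.card:ℝ)) : ℕ) : ℝ) / (H.card:ℝ) < ε + ε/4 := by
    rw [div_lt_iff₀ hn0]
    nlinarith [hceil_lt, hεn]
  have hlevq : (level X q : ℝ) ≤ (3/2) * ε * (X.card : ℝ) := by
    have : (level X q : ℝ) / (X.card:ℝ) < (3/2) * ε := by linarith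
    rw [div_lt_iff₀ hm0] at this
    linarith
  obtain ⟨p, hp, hcd⟩ := hFcover q hq hlevq
  -- crossing distance between q and p w.r.t. H is small
  have h2 := (abs_lt.mp (hdistApprox q p hq (hFoff p hp))).1
  have hcdX : (cdist X q p : ℝ) / (X.card:ℝ) ≤ ε/4 := by
    rw [div_le_iff₀ hm0]; linarith
  have hcdH : (cdist H q p : ℝ) < ε * (H.card : ℝ) / 2 := by
    have : (cdist H q p : ℝ) / (H.card:ℝ) < ε/2 := by linarith
    rw [div_lt_iff₀ hn0] at this
    linarith
  -- level of p w.r.t. H is small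
  have h3 := (abs_lt.mp (hlevApprox p (hFoff p hp))).1
  have hlXp : (level X p : ℝ) / (X.card:ℝ) ≤ (3/2) * ε := by
    rw [div_le_iff₀ hm0]; nlinarith [hFlev p hp]
  have hlevp : (level H p : ℝ) < (7/4) * ε * (H.card : ℝ) := by
    have : (level H p : ℝ) / (H.card:ℝ) < (7/4) * ε := by linarith
    rw [div_lt_iff₀ hn0] at this
    linarith
  -- combinatorial inclusion
  have hsub : H.filter (fun f => below f q) ⊆
      ((planesBelow H p).filter (fun f => below f q)) ∪
      (H.filter (fun f =>
        (q.2.2 - peval f (q.1, q.2.1)) * (p.2.2 - peval f (p.1, p.2.1)) < 0)) := by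
    intro f hf
    simp only [Finset.mem_filter, Finset.mem_union, planesBelow] at *
    obtain ⟨hfH, hfq⟩ := hf
    by_cases hb : below f p
    · exact Or.inl ⟨⟨hfH, hb⟩, hfq⟩
    · refine Or.inr ⟨hfH, ?_⟩
      have hne := hFoff p hp f hfH
      unfold below at hb hfq
      unfold onPlane at hne
      have h1 : p.2.2 < peval f (p.1, p.2.1) :=
        lt_of_le_of_ne (not_lt.mp hb) (fun h => hne h.symm)
      nlinarith
  have hcard : level H q ≤ ((planesBelow H p).filter (fun f => below f q)).card
      + cdist H q p := by
    calc level H q ≤ (((planesBelow H p).filter (fun f => below f q)) ∪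
        (H.filter (fun f =>
          (q.2.2 - peval f (q.1, q.2.1)) * (p.2.2 - peval f (p.1, p.2.1)) < 0))).card :=
          Finset.card_le_card hsub
      _ ≤ _ := Finset.card_union_le _ _
  have hcardR : (level H q : ℝ) ≤
      (((planesBelow H p).filter (fun f => below f q)).card : ℝ) + (cdist H q p : ℝ) := by
    exact_mod_cast hcard
  have hpb : ((planesBelow H p).card : ℝ) = (level H p : ℝ) := by
    simp [planesBelow, level]
  refine ⟨p, hp, ?_⟩
  apply hNnet p hp q
  rw [hpb]
  have hlevqn : ε * (H.card:ℝ) ≤ (level H q : ℝ) := by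
    rw [hlev]; exact_mod_cast hceil_ge
  nlinarith [hlevp, hcdH, hcardR, hlevqn]
end
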